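/- If Y ∈ Sym(m+n) is positive semidefinite with off-diagonal block M ∈ ℝ^{m×n} (i.e., Y = [[W₁, M],[Mᵀ, W₂]]), then rank(M) ≤ rank(Y); moreover there exists such a Y with rank(Y) = rank(M) and trace(Y) = 2‖M‖_*. -/

import Mathlib

open Matrix

/-- The nuclear norm of a real matrix: the sum of its singular values,
computed as the trace of the positive semidefinite square root of `Mᵀ * M`. -/
noncomputable def nuclearNorm {m n : ℕ} (M : Matrix (Fin m) (Fin n) ℝ) : ℝ :=
  ((Matrix.posSemidef_conjTranspose_mul_self M).1.eigenvectorUnitary.1 *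
    diagonal ((RCLike.ofReal : ℝ → ℝ) ∘ (√·) ∘ (Matrix.posSemidef_conjTranspose_mul_self M).1.eigenvalues) *
    (star (Matrix.posSemidef_conjTranspose_mul_self M).1.eigenvectorUnitary : Matrix (Fin n) (Fin n) ℝ)).trace

/-!
`M` is a submatrix of `Y`, so `rank M ≤ rank Y` for every `Y` with off-diagonal block `M`.
For the extremal `Y`, let `P = (Mᴴ M)^{1/2}` and `Q = (Mᴴ M)^{-1/2}` (the inverse taken on the
support, `0⁻¹ = 0`), and `K = M Q`. Then `K P = M`, because `M` vanishes on the kernel of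
`Mᴴ M`, so `Y = [K; 1] P [K; 1]ᴴ = [[M Kᴴ, M], [Mᴴ, P]]` is positive semidefinite with
`rank Y ≤ rank P = rank M`, and `tr (M Kᴴ) = tr (Q Mᴴ M) = tr P`, giving `tr Y = 2 tr P`.
-/

namespace Matrix

open scoped ComplexOrder MatrixOrder

theorem rank_le_rank_fromBlocks {R l m n o : Type*} [CommRing R] [StrongRankCondition R]
    [Fintype n] [Fintype o] (A : Matrix l n R) (B : Matrix l o R) (C : Matrix m n R)
    (D : Matrix m o R) : B.rank ≤ (fromBlocks A B C D).rank :=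
  rank_submatrix_le (fromBlocks A B C D) Sum.inl Sum.inr

theorem trace_fromBlocks {R m n : Type*} [AddCommMonoid R] [Fintype m] [Fintype n]
    (A : Matrix m m R) (B : Matrix m n R) (C : Matrix n m R) (D : Matrix n n R) :
    (fromBlocks A B C D).trace = A.trace + D.trace := by
  simp [trace, Fintype.sum_sum_type]

section StarRing

variable {R m n : Type*} [Semiring R] [StarRing R] [Fintype n] [DecidableEq n]

theorem fromRows_one_mul_mul_conjTranspose (K : Matrix m n R) (P : Matrix n n R) :
    fromRows K 1 * P * (fromRows K 1)ᴴ = fromBlocks (K * P * Kᴴ) (K * P) (P * Kᴴ) P := by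
  rw [conjTranspose_fromRows_eq_fromCols_conjTranspose, fromRows_mul, fromRows_mul_fromCols]
  simp [Matrix.mul_assoc]

theorem fromBlocks_eq_fromRows_one_mul_mul_conjTranspose {M K : Matrix m n R}
    {P : Matrix n n R} (hP : P.IsHermitian) (hKP : K * P = M) :
    fromBlocks (M * Kᴴ) M Mᴴ P = fromRows K 1 * P * (fromRows K 1)ᴴ := by
  rw [fromRows_one_mul_mul_conjTranspose, hKP, ← hKP, conjTranspose_mul, hP.eq]

end StarRing

variable {m n 𝕜 : Type*} [RCLike 𝕜] [Fintype m] [Fintype n] [DecidableEq n]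

theorem posSemidef_cfc_sqrt (S : Matrix n n 𝕜) : (cfc Real.sqrt S).PosSemidef :=
  nonneg_iff_posSemidef.mp (cfc_nonneg fun t _ ↦ Real.sqrt_nonneg t)

theorem cfc_inv_sqrt_mul_self {S : Matrix n n 𝕜} (hS : S.PosSemidef) :
    cfc (fun t ↦ (√t)⁻¹) S * S = cfc Real.sqrt S := calc
  cfc (fun t ↦ (√t)⁻¹) S * S = cfc (fun t ↦ (√t)⁻¹) S * cfc id S := by
    rw [cfc_id ℝ S hS.isHermitian.isSelfAdjoint]
  _ = cfc Real.sqrt S := by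
    rw [← cfc_mul _ _ _ (finite_real_spectrum.continuousOn _)
      (finite_real_spectrum.continuousOn _)]
    refine cfc_congr fun t _ ↦ ?_
    rw [id, inv_mul_eq_div, Real.div_sqrt]

theorem mul_cfc_conjTranspose_mul_self {M : Matrix m n 𝕜} {f : ℝ → ℝ}
    (hf : ∀ t ∈ spectrum ℝ (Mᴴ * M), t ≠ 0 → f t = 1) : M * cfc f (Mᴴ * M) = M := by
  have hcont (g : ℝ → ℝ) : ContinuousOn g (spectrum ℝ (Mᴴ * M)) :=
    finite_real_spectrum.continuousOn g
  have hE : (cfc f (Mᴴ * M))ᴴ = cfc f (Mᴴ * M) := IsSelfAdjoint.cfc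
  have hS : IsSelfAdjoint (Mᴴ * M) := (posSemidef_conjTranspose_mul_self M).isHermitian
  have hgram : (M - M * cfc f (Mᴴ * M))ᴴ * (M - M * cfc f (Mᴴ * M)) =
      cfc (fun t ↦ (1 - f t) * t * (1 - f t)) (Mᴴ * M) := by
    have hfactor : M - M * cfc f (Mᴴ * M) = M * (1 - cfc f (Mᴴ * M)) := by
      rw [Matrix.mul_sub, Matrix.mul_one]
    rw [cfc_mul _ _ _ (hcont _) (hcont _), cfc_mul _ _ _ (hcont _) (hcont _),
      cfc_sub (fun _ ↦ (1 : ℝ)) f _ (hcont _) (hcont _), cfc_const_one ℝ _, cfc_id' ℝ _ hS,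
      hfactor, conjTranspose_mul, conjTranspose_sub, conjTranspose_one, hE]
    simp only [Matrix.mul_assoc]
  have hzero : cfc (fun t ↦ (1 - f t) * t * (1 - f t)) (Mᴴ * M) = 0 := by
    rw [← cfc_zero ℝ (Mᴴ * M)]
    refine cfc_congr fun t ht ↦ ?_
    by_cases h : t = 0 <;> simp [h, hf t ht]
  rw [hzero, conjTranspose_mul_self_eq_zero, sub_eq_zero] at hgram
  exact hgram.symm

theorem mul_cfc_inv_sqrt_mul_cfc_sqrt (M : Matrix m n 𝕜) :
    M * cfc (fun t ↦ (√t)⁻¹) (Mᴴ * M) * cfc Real.sqrt (Mᴴ * M) = M := by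
  have hcont (g : ℝ → ℝ) : ContinuousOn g (spectrum ℝ (Mᴴ * M)) :=
    finite_real_spectrum.continuousOn g
  rw [Matrix.mul_assoc, ← cfc_mul _ _ _ (hcont _) (hcont _)]
  refine mul_cfc_conjTranspose_mul_self fun t ht ht0 ↦ inv_mul_cancel₀ ?_
  have ht_nonneg : 0 ≤ t :=
    spectrum_nonneg_of_nonneg (nonneg_iff_posSemidef.mpr (posSemidef_conjTranspose_mul_self M)) ht
  exact Real.sqrt_ne_zero'.mpr (ht_nonneg.lt_of_ne' ht0)

theorem exists_posSemidef_fromBlocks_rank_le_trace_eq (M : Matrix m n 𝕜) :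
    ∃ W₁ : Matrix m m 𝕜, (fromBlocks W₁ M Mᴴ (cfc Real.sqrt (Mᴴ * M))).PosSemidef ∧
      (fromBlocks W₁ M Mᴴ (cfc Real.sqrt (Mᴴ * M))).rank ≤ M.rank ∧
      (fromBlocks W₁ M Mᴴ (cfc Real.sqrt (Mᴴ * M))).trace =
        2 * (cfc Real.sqrt (Mᴴ * M)).trace := by
  have hS := posSemidef_conjTranspose_mul_self M
  have hY := fromBlocks_eq_fromRows_one_mul_mul_conjTranspose
    (posSemidef_cfc_sqrt (Mᴴ * M)).isHermitian (mul_cfc_inv_sqrt_mul_cfc_sqrt M)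
  refine ⟨M * (M * cfc (fun t ↦ (√t)⁻¹) (Mᴴ * M))ᴴ, ?_, ?_, ?_⟩
  · rw [hY]
    exact (posSemidef_cfc_sqrt _).mul_mul_conjTranspose_same _
  · calc _ ≤ (cfc Real.sqrt (Mᴴ * M)).rank := by
          rw [hY]; exact (rank_mul_le_left _ _).trans (rank_mul_le_right _ _)
      _ ≤ M.rank := by
          rw [← cfc_inv_sqrt_mul_self hS, ← Matrix.mul_assoc]
          exact rank_mul_le_right _ _
  · have hQ : (cfc (fun t ↦ (√t)⁻¹) (Mᴴ * M))ᴴ = cfc (fun t ↦ (√t)⁻¹) (Mᴴ * M) :=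
      IsSelfAdjoint.cfc
    rw [trace_fromBlocks, conjTranspose_mul, hQ, trace_mul_comm, Matrix.mul_assoc,
      cfc_inv_sqrt_mul_self hS, two_mul]

end Matrix

theorem nuclearNorm_eq_trace_cfc_sqrt {m n : ℕ} (M : Matrix (Fin m) (Fin n) ℝ) :
    nuclearNorm M = (cfc Real.sqrt (Mᵀ * M)).trace := by
  rw [← conjTranspose_eq_transpose_of_trivial, (posSemidef_conjTranspose_mul_self M).1.cfc_eq,
    IsHermitian.cfc, Unitary.conjStarAlgAut_apply]
  rfl

/-- For any positive semidefinite `Y = [[W₁, M],[Mᵀ, W₂]]` we have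
`rank M ≤ rank Y`; moreover such a `Y` exists with `rank Y = rank M` and
`trace Y = 2‖M‖_*`. -/
theorem offdiag_block_rank_le (m n : ℕ) (M : Matrix (Fin m) (Fin n) ℝ) :
    (∀ (W₁ : Matrix (Fin m) (Fin m) ℝ) (W₂ : Matrix (Fin n) (Fin n) ℝ),
      (fromBlocks W₁ M Mᵀ W₂).PosSemidef → M.rank ≤ (fromBlocks W₁ M Mᵀ W₂).rank) ∧
    (∃ (W₁ : Matrix (Fin m) (Fin m) ℝ) (W₂ : Matrix (Fin n) (Fin n) ℝ),
      (fromBlocks W₁ M Mᵀ W₂).PosSemidef ∧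
      (fromBlocks W₁ M Mᵀ W₂).rank = M.rank ∧
      (fromBlocks W₁ M Mᵀ W₂).trace = 2 * nuclearNorm M) := by
  refine ⟨fun W₁ W₂ _ ↦ rank_le_rank_fromBlocks W₁ M Mᵀ W₂, ?_⟩
  obtain ⟨W₁, hpsd, hrank, htrace⟩ := exists_posSemidef_fromBlocks_rank_le_trace_eq M
  rw [conjTranspose_eq_transpose_of_trivial] at hpsd hrank htrace
  exact ⟨W₁, _, hpsd, hrank.antisymm (rank_le_rank_fromBlocks _ _ _ _),
    by rw [htrace, nuclearNorm_eq_trace_cfc_sqrt]⟩
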